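/- arXiv:2408.10494 — 3 statements merged into one kernel-verified Lean document; each statement's English description precedes it below -/
import Mathlib

section
/- Suppose for each ℓ ∈ {1,...,L} there is an injective map σ_ℓ : {1,...,m} → {1,...,N} (local-to-global node index), symmetric positive definite diagonal matrices H^(ℓ) ∈ ℝ^{m×m}, and matrices Q^(ℓ) ∈ ℝ^{m×m} satisfying Q^(ℓ) + (Q^(ℓ))^T = E^(ℓ). Define the assembled N×N matrices H = Σ_ℓ Z_ℓ H^(ℓ) Z_ℓ^T and Q = Σ_ℓ Z_ℓ Q^(ℓ) Z_ℓ^T, where Z_ℓ ∈ ℝ^{N×m} has (Z_ℓ)_{σ_ℓ(i), i} = 1 and zeros elsewhere, and assume every global index lies in the range of some σ_ℓ. Then H is symmetric positive definite diagonal and Q + Q^T = Σ_ℓ Z_ℓ E^(ℓ) Z_ℓ^T; in particular the assembled operator satisfies the SBP property. -/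
/-! Entrywise `(Z A Zᵀ) I J = ∑ {A i j | σ i = I, σ j = J}`, so the scatter of a diagonal matrix
is diagonal, its `I`-th entry collecting the weights `d ℓ i` with `σ ℓ i = I`; surjectivity of
the index maps makes each such entry a nonempty sum of positive weights. The identity for
`Q + Qᵀ` is linearity of `A ↦ Z A Zᵀ` together with its compatibility with transposition. -/

open Matrix

namespace Matrix

variable {R n N : Type*} [Fintype n]

theorem mul_mul_transpose_add_transpose [CommSemiring R] (Z : Matrix N n R) (A : Matrix n n R) :
    Z * A * Zᵀ + (Z * A * Zᵀ)ᵀ = Z * (A + Aᵀ) * Zᵀ := by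
  simp only [transpose_mul, transpose_transpose, Matrix.mul_add, Matrix.add_mul, Matrix.mul_assoc]

theorem mul_diagonal_mul_transpose_of_eq_ite [CommSemiring R] [DecidableEq n] [DecidableEq N]
    {σ : n → N} {Z : Matrix N n R} (hZ : ∀ I i, Z I i = if I = σ i then 1 else 0) (d : n → R) :
    Z * diagonal d * Zᵀ = diagonal fun I => ∑ i, if σ i = I then d i else 0 := by
  ext I J
  simp only [mul_apply, transpose_apply, hZ, diagonal_apply]
  split_ifs with hIJ
  · subst hIJ
    refine Finset.sum_congr rfl fun i _ => ?_
    by_cases h : I = σ i <;> simp [h, eq_comm]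
  · refine Finset.sum_eq_zero fun i _ => ?_
    rcases eq_or_ne I (σ i) with rfl | h
    · simp [Ne.symm hIJ]
    · simp [h]

theorem diagonal_sum [AddCommMonoid R] [DecidableEq N] {ι : Type*} (s : Finset ι)
    (f : ι → N → R) : ∑ ℓ ∈ s, diagonal (f ℓ) = diagonal (∑ ℓ ∈ s, f ℓ) :=
  (map_sum (diagonalAddMonoidHom N R) f s).symm

end Matrix

theorem sum_sum_ite_pos {ι κ N R : Type*} [Fintype ι] [Fintype κ] [DecidableEq N]
    [AddCommMonoid R] [PartialOrder R] [IsOrderedCancelAddMonoid R]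
    {σ : ι → κ → N} {d : ι → κ → R} (hd : ∀ ℓ i, 0 < d ℓ i) {I : N}
    (hI : ∃ ℓ i, σ ℓ i = I) : 0 < ∑ ℓ, ∑ i, if σ ℓ i = I then d ℓ i else 0 := by
  obtain ⟨ℓ, i, rfl⟩ := hI
  have hnonneg : ∀ ℓ' i', 0 ≤ if σ ℓ' i' = σ ℓ i then d ℓ' i' else 0 := fun ℓ' i' => by
    split_ifs
    exacts [(hd ℓ' i').le, le_rfl]
  refine Finset.sum_pos' (fun ℓ' _ => Finset.sum_nonneg fun i' _ => hnonneg ℓ' i')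
    ⟨ℓ, Finset.mem_univ _, Finset.sum_pos' (fun i' _ => hnonneg ℓ i') ⟨i, Finset.mem_univ _, ?_⟩⟩
  simpa using hd ℓ i

theorem assembly_preserves_sbp_general {L m N : ℕ}
    (σ : Fin L → Fin m → Fin N)
    (hσsurj : ∀ I : Fin N, ∃ ℓ i, σ ℓ i = I)
    (d : Fin L → Fin m → ℝ) (hd : ∀ ℓ i, 0 < d ℓ i)
    (H : Fin L → Matrix (Fin m) (Fin m) ℝ)
    (hH : ∀ ℓ, H ℓ = Matrix.diagonal (d ℓ))
    (Q E : Fin L → Matrix (Fin m) (Fin m) ℝ)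
    (hQ : ∀ ℓ, Q ℓ + (Q ℓ)ᵀ = E ℓ)
    (Z : Fin L → Matrix (Fin N) (Fin m) ℝ)
    (hZ : ∀ ℓ I i, Z ℓ I i = if I = σ ℓ i then 1 else 0) :
    (∃ e : Fin N → ℝ, (∀ I, 0 < e I) ∧
        (∑ ℓ, Z ℓ * H ℓ * (Z ℓ)ᵀ) = Matrix.diagonal e) ∧
    (∑ ℓ, Z ℓ * H ℓ * (Z ℓ)ᵀ).PosDef ∧
    (∑ ℓ, Z ℓ * Q ℓ * (Z ℓ)ᵀ) + (∑ ℓ, Z ℓ * Q ℓ * (Z ℓ)ᵀ)ᵀ =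
      ∑ ℓ, Z ℓ * E ℓ * (Z ℓ)ᵀ := by
  set e : Fin N → ℝ := fun I => ∑ ℓ, ∑ i, if σ ℓ i = I then d ℓ i else 0
  have he : ∀ I, 0 < e I := fun I => sum_sum_ite_pos hd (hσsurj I)
  have hdiag : ∑ ℓ, Z ℓ * H ℓ * (Z ℓ)ᵀ = diagonal e := by
    simp only [hH, mul_diagonal_mul_transpose_of_eq_ite (hZ _)]
    rw [diagonal_sum]
    congr 1
    ext I
    exact Finset.sum_apply ..
  refine ⟨⟨e, he, hdiag⟩, hdiag ▸ PosDef.diagonal he, ?_⟩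
  rw [transpose_sum, ← Finset.sum_add_distrib]
  simp only [mul_mul_transpose_add_transpose, hQ]

/-- Continuous-Galerkin-type assembly preserves the SBP structure: the
assembled norm matrix is diagonal positive definite and the assembled `Q`
satisfies `Q + Qᵀ = Σ_ℓ Z_ℓ E^(ℓ) Z_ℓᵀ`. -/
theorem assembly_preserves_sbp {L m N : ℕ}
    (σ : Fin L → Fin m → Fin N)
    (hσinj : ∀ ℓ, Function.Injective (σ ℓ))
    (hσsurj : ∀ I : Fin N, ∃ ℓ i, σ ℓ i = I)
    (d : Fin L → Fin m → ℝ) (hd : ∀ ℓ i, 0 < d ℓ i)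
    (H : Fin L → Matrix (Fin m) (Fin m) ℝ)
    (hH : ∀ ℓ, H ℓ = Matrix.diagonal (d ℓ))
    (Q E : Fin L → Matrix (Fin m) (Fin m) ℝ)
    (hQ : ∀ ℓ, Q ℓ + (Q ℓ)ᵀ = E ℓ)
    (Z : Fin L → Matrix (Fin N) (Fin m) ℝ)
    (hZ : ∀ ℓ I i, Z ℓ I i = if I = σ ℓ i then 1 else 0) :
    (∃ e : Fin N → ℝ, (∀ I, 0 < e I) ∧
        (∑ ℓ, Z ℓ * H ℓ * (Z ℓ)ᵀ) = Matrix.diagonal e) ∧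
    (∑ ℓ, Z ℓ * H ℓ * (Z ℓ)ᵀ).PosDef ∧
    (∑ ℓ, Z ℓ * Q ℓ * (Z ℓ)ᵀ) + (∑ ℓ, Z ℓ * Q ℓ * (Z ℓ)ᵀ)ᵀ =
      ∑ ℓ, Z ℓ * E ℓ * (Z ℓ)ᵀ :=
  assembly_preserves_sbp_general σ hσsurj d hd H hH Q E hQ Z hZ
end

section
/- With the assembly notation above, suppose additionally that for each ℓ, [H^(ℓ)]⁻¹Q^(ℓ) applied to the restriction of any polynomial P of total degree ≤ p to the local nodes yields the exact nodal values of ∂P/∂ξ. Then D = H⁻¹Q applied to the restriction of P to the global nodes yields the exact nodal values of ∂P/∂ξ at every global node. -/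
/-!
Write `u` and `u'` for the nodal values of `P` and `∂P/∂ξ`. Since every local `H^(ℓ)` is diagonal,
local exactness says `Q^(ℓ) (u ∘ σ_ℓ) = d^(ℓ) · (u' ∘ σ_ℓ)` entrywise. Scattering back and summing,
`Q u = w · u'` with `w = Σ_ℓ Z_ℓ d^(ℓ)`, while `H = diag w`. Every global node lies in some
subdomain, so `w > 0`, and dividing by `w` gives `H⁻¹ Q u = u'`.
-/

open Matrix

variable {ι m n R : Type*} [DecidableEq n]

variable (R) in
/-- The assembly matrix `Z_ℓ` of a subdomain with node map `σ = σ_ℓ`. -/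
def scatter [Zero R] [One R] (σ : m → n) : Matrix n m R :=
  of fun I i => if I = σ i then 1 else 0

section Scatter

variable [CommSemiring R] (σ : m → n)

theorem scatter_transpose_mulVec [Fintype n] (v : n → R) : (scatter R σ)ᵀ *ᵥ v = v ∘ σ := by
  ext i
  simp [scatter, mulVec, dotProduct]

theorem scatter_mulVec_apply [Fintype m] (w : m → R) (I : n) :
    (scatter R σ *ᵥ w) I = ∑ i, if I = σ i then w i else 0 := by
  simp [scatter, mulVec, dotProduct]

theorem scatter_mulVec_mul_comp [Fintype m] (w : m → R) (g : n → R) :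
    scatter R σ *ᵥ (w * g ∘ σ) = (scatter R σ *ᵥ w) * g := by
  ext I
  simp only [Pi.mul_apply, scatter_mulVec_apply, Finset.sum_mul, Function.comp_apply]
  refine Finset.sum_congr rfl fun i _ => ?_
  split_ifs with h <;> simp [h]

theorem scatter_mul_diagonal_mul_transpose [Fintype m] [DecidableEq m] (d : m → R) :
    scatter R σ * diagonal d * (scatter R σ)ᵀ = diagonal (scatter R σ *ᵥ d) := by
  ext I J
  rw [diagonal_apply, Matrix.mul_apply, scatter_mulVec_apply]
  simp only [mul_diagonal, transpose_apply, scatter, of_apply]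
  split_ifs with hIJ
  · subst hIJ
    exact Finset.sum_congr rfl fun i _ => by split_ifs <;> simp
  · exact Finset.sum_eq_zero fun i _ => by split_ifs <;> simp_all

end Scatter

theorem inv_diagonal_mul_mulVec_eq_iff [Fintype n] [Field R] {v : n → R} (hv : ∀ i, v i ≠ 0)
    (B : Matrix n n R) (u w : n → R) :
    ((diagonal v)⁻¹ * B) *ᵥ u = w ↔ B *ᵥ u = v * w := by
  have hinv : (diagonal v)⁻¹ = diagonal fun i => (v i)⁻¹ :=
    inv_eq_right_inv <| by simp [diagonal_mul_diagonal, hv]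
  rw [← mulVec_mulVec, hinv, funext_iff, funext_iff]
  simp only [mulVec_diagonal, Pi.mul_apply, inv_mul_eq_iff_eq_mul₀ (hv _)]

theorem sum_scatter_mulVec_pos [Fintype ι] [Fintype m] [CommSemiring R] [PartialOrder R]
    [IsStrictOrderedRing R] (σ : ι → m → n) (hσ : ∀ I, ∃ ℓ i, σ ℓ i = I) (d : ι → m → R)
    (hd : ∀ ℓ i, 0 < d ℓ i) (I : n) : 0 < (∑ ℓ, scatter R (σ ℓ) *ᵥ d ℓ) I := by
  obtain ⟨ℓ₀, i₀, rfl⟩ := hσ I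
  have hnonneg : ∀ ℓ i, 0 ≤ if σ ℓ₀ i₀ = σ ℓ i then d ℓ i else 0 := fun ℓ i => by
    split_ifs
    exacts [(hd ℓ i).le, le_rfl]
  have hpos : 0 < (scatter R (σ ℓ₀) *ᵥ d ℓ₀) (σ ℓ₀ i₀) := by
    rw [scatter_mulVec_apply]
    exact Finset.sum_pos' (fun i _ => hnonneg ℓ₀ i) ⟨i₀, Finset.mem_univ _, by simp [hd]⟩
  rw [Finset.sum_apply]
  refine Finset.sum_pos' (fun ℓ _ => ?_) ⟨ℓ₀, Finset.mem_univ _, hpos⟩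
  rw [scatter_mulVec_apply]
  exact Finset.sum_nonneg fun i _ => hnonneg ℓ i

theorem assembled_inv_mul_mulVec_eq [Fintype ι] [Fintype m] [DecidableEq m] [Fintype n]
    [Field R] [LinearOrder R] [IsStrictOrderedRing R] (σ : ι → m → n) (hσ : ∀ I, ∃ ℓ i, σ ℓ i = I)
    (d : ι → m → R) (hd : ∀ ℓ i, 0 < d ℓ i) (Q : ι → Matrix m m R) (u u' : n → R)
    (hloc : ∀ ℓ, ((diagonal (d ℓ))⁻¹ * Q ℓ) *ᵥ (u ∘ σ ℓ) = u' ∘ σ ℓ) :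
    ((∑ ℓ, scatter R (σ ℓ) * diagonal (d ℓ) * (scatter R (σ ℓ))ᵀ)⁻¹ *
      ∑ ℓ, scatter R (σ ℓ) * Q ℓ * (scatter R (σ ℓ))ᵀ) *ᵥ u = u' := by
  set w := ∑ ℓ, scatter R (σ ℓ) *ᵥ d ℓ
  have hmass : ∑ ℓ, scatter R (σ ℓ) * diagonal (d ℓ) * (scatter R (σ ℓ))ᵀ = diagonal w := by
    simp only [scatter_mul_diagonal_mul_transpose, w]
    exact (map_sum (diagonalAddMonoidHom n R) _ _).symm
  have hstiff : (∑ ℓ, scatter R (σ ℓ) * Q ℓ * (scatter R (σ ℓ))ᵀ) *ᵥ u = w * u' := by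
    rw [sum_mulVec, Finset.sum_mul]
    refine Finset.sum_congr rfl fun ℓ _ => ?_
    have hQ := (inv_diagonal_mul_mulVec_eq_iff (fun i => (hd ℓ i).ne') _ _ _).mp (hloc ℓ)
    rw [← mulVec_mulVec, ← mulVec_mulVec, scatter_transpose_mulVec, hQ, scatter_mulVec_mul_comp]
  rw [hmass, inv_diagonal_mul_mulVec_eq_iff fun I => (sum_scatter_mulVec_pos σ hσ d hd I).ne',
    hstiff]

theorem assembly_preserves_accuracy_general {L m N dim p : ℕ}
    (σ : Fin L → Fin m → Fin N)
    (hσsurj : ∀ I : Fin N, ∃ ℓ i, σ ℓ i = I)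
    (X : Fin N → (Fin dim → ℝ)) (k : Fin dim)
    (d : Fin L → Fin m → ℝ) (hd : ∀ ℓ i, 0 < d ℓ i)
    (H : Fin L → Matrix (Fin m) (Fin m) ℝ)
    (hH : ∀ ℓ, H ℓ = Matrix.diagonal (d ℓ))
    (Q : Fin L → Matrix (Fin m) (Fin m) ℝ)
    (hexact : ∀ P : MvPolynomial (Fin dim) ℝ, P.totalDegree ≤ p → ∀ ℓ i,
      ((H ℓ)⁻¹ * Q ℓ).mulVec (fun j => MvPolynomial.eval (X (σ ℓ j)) P) i =
        MvPolynomial.eval (X (σ ℓ i)) (MvPolynomial.pderiv k P))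
    (Z : Fin L → Matrix (Fin N) (Fin m) ℝ)
    (hZ : ∀ ℓ I i, Z ℓ I i = if I = σ ℓ i then 1 else 0) :
    ∀ P : MvPolynomial (Fin dim) ℝ, P.totalDegree ≤ p → ∀ I : Fin N,
      ((∑ ℓ, Z ℓ * H ℓ * (Z ℓ)ᵀ)⁻¹ * (∑ ℓ, Z ℓ * Q ℓ * (Z ℓ)ᵀ)).mulVec
          (fun J => MvPolynomial.eval (X J) P) I =
        MvPolynomial.eval (X I) (MvPolynomial.pderiv k P) := by
  intro P hP
  obtain rfl : H = fun ℓ => diagonal (d ℓ) := funext hH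
  obtain rfl : Z = fun ℓ => scatter ℝ (σ ℓ) := funext fun ℓ => Matrix.ext (hZ ℓ)
  exact congrFun (assembled_inv_mul_mulVec_eq σ hσsurj d hd Q _ _ fun ℓ => funext (hexact P hP ℓ))

/-- If each subdomain operator `(H^(ℓ))⁻¹ Q^(ℓ)` differentiates polynomials of
total degree ≤ p exactly at its local nodes, then the assembled operator
`D = H⁻¹ Q` differentiates them exactly at every global node. -/
theorem assembly_preserves_accuracy {L m N dim p : ℕ}
    (σ : Fin L → Fin m → Fin N)
    (hσinj : ∀ ℓ, Function.Injective (σ ℓ))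
    (hσsurj : ∀ I : Fin N, ∃ ℓ i, σ ℓ i = I)
    (X : Fin N → (Fin dim → ℝ)) (k : Fin dim)
    (d : Fin L → Fin m → ℝ) (hd : ∀ ℓ i, 0 < d ℓ i)
    (H : Fin L → Matrix (Fin m) (Fin m) ℝ)
    (hH : ∀ ℓ, H ℓ = Matrix.diagonal (d ℓ))
    (Q : Fin L → Matrix (Fin m) (Fin m) ℝ)
    (hexact : ∀ P : MvPolynomial (Fin dim) ℝ, P.totalDegree ≤ p → ∀ ℓ i,
      ((H ℓ)⁻¹ * Q ℓ).mulVec (fun j => MvPolynomial.eval (X (σ ℓ j)) P) i =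
        MvPolynomial.eval (X (σ ℓ i)) (MvPolynomial.pderiv k P))
    (Z : Fin L → Matrix (Fin N) (Fin m) ℝ)
    (hZ : ∀ ℓ I i, Z ℓ I i = if I = σ ℓ i then 1 else 0) :
    ∀ P : MvPolynomial (Fin dim) ℝ, P.totalDegree ≤ p → ∀ I : Fin N,
      ((∑ ℓ, Z ℓ * H ℓ * (Z ℓ)ᵀ)⁻¹ * (∑ ℓ, Z ℓ * Q ℓ * (Z ℓ)ᵀ)).mulVec
          (fun J => MvPolynomial.eval (X J) P) I =
        MvPolynomial.eval (X I) (MvPolynomial.pderiv k P) :=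
  assembly_preserves_accuracy_general σ hσsurj X k d hd H hH Q hexact Z hZ
end

section
/- Splitting the reference triangle {(ξ₁,ξ₂) : ξ₁,ξ₂ ≥ −1, ξ₁+ξ₂ ≤ 0} by connecting the centroid to the midpoints of each edge produces three quadrilateral subdomains whose union is the triangle and whose pairwise interiors are disjoint; moreover, each of the three bilinear maps from [-1,1]² onto its quadrilateral subdomain has positive Jacobian determinant throughout [-1,1]². -/
/-- The four bilinear vertex shape functions on `[-1,1]²`. -/
noncomputable def bilinearPsi : Fin 4 → ℝ → ℝ → ℝ :=
  ![fun a b => (1 - a) * (1 - b) / 4,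
    fun a b => (1 + a) * (1 - b) / 4,
    fun a b => (1 + a) * (1 + b) / 4,
    fun a b => (1 - a) * (1 + b) / 4]

/-- Vertices (counterclockwise) of the three quadrilateral subdomains of the
reference triangle: a triangle vertex, the midpoints of its two adjacent
edges, and the centroid `(-1/3, -1/3)`. -/
noncomputable def triQuadVerts : Fin 3 → Fin 4 → ℝ × ℝ :=
  ![![((-1 : ℝ), (-1 : ℝ)), ((0 : ℝ), (-1 : ℝ)), ((-1/3 : ℝ), (-1/3 : ℝ)), ((-1 : ℝ), (0 : ℝ))],
    ![((1 : ℝ), (-1 : ℝ)), ((0 : ℝ), (0 : ℝ)), ((-1/3 : ℝ), (-1/3 : ℝ)), ((0 : ℝ), (-1 : ℝ))],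
    ![((-1 : ℝ), (1 : ℝ)), ((-1 : ℝ), (0 : ℝ)), ((-1/3 : ℝ), (-1/3 : ℝ)), ((0 : ℝ), (0 : ℝ))]]

/-- The bilinear map from the reference square onto the `ℓ`-th quadrilateral
subdomain of the reference triangle. -/
noncomputable def triSplitMap (ℓ : Fin 3) (q : ℝ × ℝ) : ℝ × ℝ :=
  ∑ α : Fin 4, bilinearPsi α q.1 q.2 • triQuadVerts ℓ α

/-!
Write `λ₀ = -(x + y)/2`, `λ₁ = (x + 1)/2`, `λ₂ = (y + 1)/2` for the barycentric coordinates of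
the reference triangle. In the coordinates `(λ_{ℓ+1}, λ_{ℓ+2})` the `ℓ`-th quadrilateral has the
vertices `(0,0), (1/2,0), (1/3,1/3), (0,1/2)` whatever `ℓ` is, so the three bilinear maps are one
and the same map `kiteMap` of the square onto the kite `λ_{ℓ+1}, λ_{ℓ+2} ≤ λ_ℓ`; that it is onto
comes down to solving a quadratic equation. The three kites are the cells of the triangle on which
`λ_ℓ` is the largest coordinate, so they cover it, and two of them meet only on a line
`λ_ℓ = λ_ℓ'`.

The Jacobian determinant of any bilinear map is the bilinear interpolant of a quarter of the cross
products of the two edges at each corner; it is therefore positive on the whole square as soon as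
the quadrilateral is strictly convex.
-/

noncomputable def bilinearMap (P : Fin 4 → ℝ × ℝ) (q : ℝ × ℝ) : ℝ × ℝ :=
  ∑ α : Fin 4, bilinearPsi α q.1 q.2 • P α

noncomputable def jacobianDet (F : ℝ × ℝ → ℝ × ℝ) (q : ℝ × ℝ) : ℝ :=
  Matrix.det
    !![deriv (fun a => (F (a, q.2)).1) q.1, deriv (fun b => (F (q.1, b)).1) q.2;
      deriv (fun a => (F (a, q.2)).2) q.1, deriv (fun b => (F (q.1, b)).2) q.2]

def cornerDet (P : Fin 4 → ℝ × ℝ) (α : Fin 4) : ℝ :=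
  (P (α + 1) - P α).1 * (P (α - 1) - P α).2 - (P (α + 1) - P α).2 * (P (α - 1) - P α).1

lemma bilinearPsi_nonneg (α : Fin 4) {a b : ℝ} (ha : a ∈ Set.Icc (-1 : ℝ) 1)
    (hb : b ∈ Set.Icc (-1 : ℝ) 1) : 0 ≤ bilinearPsi α a b := by
  obtain ⟨ha₁, ha₂⟩ := ha
  obtain ⟨hb₁, hb₂⟩ := hb
  fin_cases α <;> exact div_nonneg (mul_nonneg (by linarith) (by linarith)) zero_le_four

lemma sum_bilinearPsi (a b : ℝ) : ∑ α, bilinearPsi α a b = 1 := by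
  simp only [Fin.sum_univ_four, bilinearPsi, Fin.isValue, Matrix.cons_val, Matrix.cons_val_zero,
    Matrix.cons_val_one]
  ring

lemma hasDerivAt_sum_bilinearPsi_mul_left (c : Fin 4 → ℝ) (a b : ℝ) :
    HasDerivAt (fun a => ∑ α, bilinearPsi α a b * c α)
      (((1 - b) * (c 1 - c 0) + (1 + b) * (c 2 - c 3)) / 4) a := by
  have h : (fun a => ∑ α, bilinearPsi α a b * c α) = fun a =>
      ∑ α, bilinearPsi α 0 b * c α + a * (((1 - b) * (c 1 - c 0) + (1 + b) * (c 2 - c 3)) / 4) := by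
    funext a
    simp only [Fin.sum_univ_four, bilinearPsi, Fin.isValue, Matrix.cons_val, Matrix.cons_val_zero,
      Matrix.cons_val_one]
    ring
  rw [h]
  exact (((hasDerivAt_id a).mul_const _).const_add _).congr_deriv (one_mul _)

lemma hasDerivAt_sum_bilinearPsi_mul_right (c : Fin 4 → ℝ) (a b : ℝ) :
    HasDerivAt (fun b => ∑ α, bilinearPsi α a b * c α)
      (((1 - a) * (c 3 - c 0) + (1 + a) * (c 2 - c 1)) / 4) b := by
  have h : (fun b => ∑ α, bilinearPsi α a b * c α) = fun b =>
      ∑ α, bilinearPsi α a 0 * c α + b * (((1 - a) * (c 3 - c 0) + (1 + a) * (c 2 - c 1)) / 4) := by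
    funext b
    simp only [Fin.sum_univ_four, bilinearPsi, Fin.isValue, Matrix.cons_val, Matrix.cons_val_zero,
      Matrix.cons_val_one]
    ring
  rw [h]
  exact (((hasDerivAt_id b).mul_const _).const_add _).congr_deriv (one_mul _)

lemma jacobianDet_bilinearMap (P : Fin 4 → ℝ × ℝ) (q : ℝ × ℝ) :
    jacobianDet (bilinearMap P) q = ∑ α, bilinearPsi α q.1 q.2 * cornerDet P α / 4 := by
  simp only [jacobianDet, bilinearMap, Prod.fst_sum, Prod.snd_sum, Prod.smul_fst,
    Prod.smul_snd, smul_eq_mul]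
  rw [(hasDerivAt_sum_bilinearPsi_mul_left _ _ _).deriv,
    (hasDerivAt_sum_bilinearPsi_mul_left _ _ _).deriv,
    (hasDerivAt_sum_bilinearPsi_mul_right _ _ _).deriv,
    (hasDerivAt_sum_bilinearPsi_mul_right _ _ _).deriv, Matrix.det_fin_two_of]
  simp only [Fin.sum_univ_four, bilinearPsi, cornerDet, Fin.isValue, Fin.reduceAdd, Fin.reduceSub,
    Matrix.cons_val, Matrix.cons_val_zero, Matrix.cons_val_one, Prod.fst_sub, Prod.snd_sub]
  ring

lemma jacobianDet_bilinearMap_pos {P : Fin 4 → ℝ × ℝ} (hP : ∀ α, 0 < cornerDet P α)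
    {q : ℝ × ℝ} (hq : q ∈ Set.Icc (-1 : ℝ) 1 ×ˢ Set.Icc (-1 : ℝ) 1) :
    0 < jacobianDet (bilinearMap P) q := by
  rw [jacobianDet_bilinearMap]
  have hψ : ∀ α, 0 ≤ bilinearPsi α q.1 q.2 := fun α => bilinearPsi_nonneg α hq.1 hq.2
  obtain ⟨α, -, hα⟩ : ∃ α ∈ Finset.univ, (0 : ℝ) < bilinearPsi α q.1 q.2 :=
    Finset.exists_lt_of_sum_lt (by rw [Finset.sum_const_zero, sum_bilinearPsi]; exact one_pos)
  exact Finset.sum_pos' (fun β _ => by have := hP β; have := hψ β; positivity)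
    ⟨α, Finset.mem_univ α, by have := hP α; positivity⟩

open Topology in
lemma interior_setOf_eq_eq_empty {E : Type*} [TopologicalSpace E] [AddCommGroup E] [Module ℝ E]
    [ContinuousAdd E] [ContinuousSMul ℝ E] {f g : E → ℝ} {e : E} {c d : ℝ} (hcd : c ≠ d)
    (hf : ∀ p (t : ℝ), f (p + t • e) = f p + t * c)
    (hg : ∀ p (t : ℝ), g (p + t • e) = g p + t * d) :
    interior {p | f p = g p} = ∅ := by
  refine Set.eq_empty_of_forall_notMem fun p hp => ?_
  have hline : ∀ᶠ t : ℝ in 𝓝[>] 0, p + t • e ∈ {p | f p = g p} := by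
    have : Filter.Tendsto (fun t : ℝ => p + t • e) (𝓝 0) (𝓝 p) := by
      simpa using (by fun_prop : Continuous fun t : ℝ => p + t • e).tendsto 0
    exact nhdsWithin_le_nhds (this.eventually (mem_interior_iff_mem_nhds.1 hp))
  obtain ⟨t, ht, htpos⟩ := (hline.and self_mem_nhdsWithin).exists
  have hp₀ : f p = g p := (interior_subset hp : p ∈ {p | f p = g p})
  simp only [Set.mem_ofPred_eq, hf, hg, hp₀, add_right_inj] at ht
  exact hcd (mul_left_cancel₀ htpos.ne' ht)

lemma cornerDet_triQuadVerts_pos (ℓ : Fin 3) (α : Fin 4) : 0 < cornerDet (triQuadVerts ℓ) α := by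
  fin_cases ℓ <;> fin_cases α <;>
    simp only [cornerDet, triQuadVerts, Fin.reduceFinMk, Fin.isValue, Fin.reduceAdd, Fin.reduceSub,
      Matrix.cons_val, Matrix.cons_val_zero, Matrix.cons_val_one, Prod.mk_sub_mk] <;>
    norm_num

lemma forall_fin_three_iff_rotate (ℓ : Fin 3) (P : Fin 3 → Prop) :
    (∀ j, P j) ↔ P ℓ ∧ P (ℓ + 1) ∧ P (ℓ + 2) := by
  refine ⟨fun h => ⟨h _, h _, h _⟩, fun ⟨h₀, h₁, h₂⟩ j => ?_⟩
  have hj : ∀ ℓ j : Fin 3, j = ℓ ∨ j = ℓ + 1 ∨ j = ℓ + 2 := by decide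
  obtain rfl | rfl | rfl := hj ℓ j
  exacts [h₀, h₁, h₂]

noncomputable def baryCoord (j : Fin 3) (p : ℝ × ℝ) : ℝ :=
  ![-(p.1 + p.2) / 2, (p.1 + 1) / 2, (p.2 + 1) / 2] j

lemma baryCoord_add_add (ℓ : Fin 3) (p : ℝ × ℝ) :
    baryCoord ℓ p + baryCoord (ℓ + 1) p + baryCoord (ℓ + 2) p = 1 := by
  fin_cases ℓ <;>
    simp only [baryCoord, Fin.isValue, Fin.reduceFinMk, Fin.reduceAdd, Matrix.cons_val,
      Matrix.cons_val_zero, Matrix.cons_val_one] <;>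
    ring

lemma eq_of_baryCoord_eq (ℓ : Fin 3) {p p' : ℝ × ℝ}
    (h₁ : baryCoord (ℓ + 1) p = baryCoord (ℓ + 1) p')
    (h₂ : baryCoord (ℓ + 2) p = baryCoord (ℓ + 2) p') : p = p' := by
  have h : ∀ j, baryCoord j p = baryCoord j p' := (forall_fin_three_iff_rotate ℓ _).2
    ⟨by linarith [baryCoord_add_add ℓ p, baryCoord_add_add ℓ p'], h₁, h₂⟩
  have hx : (p.1 + 1) / 2 = (p'.1 + 1) / 2 := h 1
  have hy : (p.2 + 1) / 2 = (p'.2 + 1) / 2 := h 2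
  ext <;> linarith

-- `(1, 2)` is a direction along which the three barycentric coordinates change at distinct rates.
lemma baryCoord_add_smul (j : Fin 3) (p : ℝ × ℝ) (t : ℝ) :
    baryCoord j (p + t • (1, 2)) = baryCoord j p + t * ![-3 / 2, 1 / 2, 1] j := by
  fin_cases j <;>
    simp only [baryCoord, Fin.isValue, Fin.reduceFinMk, Matrix.cons_val, Matrix.cons_val_zero,
      Matrix.cons_val_one, Prod.fst_add, Prod.snd_add, Prod.smul_mk, smul_eq_mul] <;>
    ring

def subdomain (ℓ : Fin 3) : Set (ℝ × ℝ) :=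
  {p | ∀ j, 0 ≤ baryCoord j p ∧ baryCoord j p ≤ baryCoord ℓ p}

def kite : Set (ℝ × ℝ) :=
  {m | 0 ≤ m.1 ∧ 0 ≤ m.2 ∧ 2 * m.1 + m.2 ≤ 1 ∧ m.1 + 2 * m.2 ≤ 1}

noncomputable def kiteMap (q : ℝ × ℝ) : ℝ × ℝ :=
  ((1 + q.1) * (5 - q.2) / 24, (1 + q.2) * (5 - q.1) / 24)

lemma mem_subdomain_iff (ℓ : Fin 3) (p : ℝ × ℝ) :
    p ∈ subdomain ℓ ↔ (baryCoord (ℓ + 1) p, baryCoord (ℓ + 2) p) ∈ kite := by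
  have hsum := baryCoord_add_add ℓ p
  simp only [subdomain, kite, Set.mem_ofPred_eq, forall_fin_three_iff_rotate ℓ]
  constructor
  · rintro ⟨-, ⟨h₁, h₁'⟩, h₂, h₂'⟩
    exact ⟨h₁, h₂, by linarith, by linarith⟩
  · rintro ⟨h₁, h₂, h₁', h₂'⟩
    exact ⟨⟨by linarith, le_rfl⟩, ⟨h₁, by linarith⟩, h₂, by linarith⟩

lemma kiteMap_mem_kite {q : ℝ × ℝ} (hq : q ∈ Set.Icc (-1 : ℝ) 1 ×ˢ Set.Icc (-1 : ℝ) 1) :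
    kiteMap q ∈ kite := by
  obtain ⟨⟨ha₁, ha₂⟩, hb₁, hb₂⟩ := hq
  have h₁ := mul_nonneg (sub_nonneg.2 ha₂) (sub_nonneg.2 hb₂)
  have h₂ := mul_nonneg (neg_le_iff_add_nonneg'.1 ha₁) (sub_nonneg.2 hb₂)
  have h₃ := mul_nonneg (neg_le_iff_add_nonneg'.1 ha₁) (neg_le_iff_add_nonneg'.1 hb₁)
  have h₄ := mul_nonneg (sub_nonneg.2 ha₂) (neg_le_iff_add_nonneg'.1 hb₁)
  refine ⟨?_, ?_, ?_, ?_⟩ <;> simp only [kiteMap] <;> nlinarith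

lemma exists_kiteMap_eq {m : ℝ × ℝ} (hm : m ∈ kite) :
    ∃ q ∈ Set.Icc (-1 : ℝ) 1 ×ˢ Set.Icc (-1 : ℝ) 1, kiteMap q = m := by
  obtain ⟨μ, ν⟩ := m
  obtain ⟨hμ, hν, h₁, h₂⟩ := hm
  set δ := μ - ν
  set D := 9 - 12 * (μ + ν) + 4 * δ ^ 2
  have hr₁ : 1 + 2 * δ ≤ √D := Real.le_sqrt_of_sq_le (by nlinarith)
  have hr₂ : 1 - 2 * δ ≤ √D := Real.le_sqrt_of_sq_le (by nlinarith)
  have hr₃ : √D ≤ 3 + 2 * δ := (Real.sqrt_le_left (by linarith)).2 (by nlinarith)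
  have hr₄ : √D ≤ 3 - 2 * δ := (Real.sqrt_le_left (by linarith)).2 (by nlinarith)
  have hD : √D ^ 2 = D := Real.sq_sqrt (by nlinarith)
  -- Subtracting the two equations gives `a - b = 4δ`; then `a + b = 4 - 2√D` is the smaller
  -- root of the remaining quadratic.
  refine ⟨(2 - √D + 2 * δ, 2 - √D - 2 * δ), ⟨⟨?_, ?_⟩, ?_, ?_⟩, ?_⟩
  any_goals linarith
  simp only [kiteMap, Prod.mk.injEq]
  constructor <;> linear_combination (-1 / 24 : ℝ) * hD

lemma image_kiteMap : kiteMap '' (Set.Icc (-1 : ℝ) 1 ×ˢ Set.Icc (-1 : ℝ) 1) = kite :=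
  Set.Subset.antisymm (Set.image_subset_iff.2 fun _ => kiteMap_mem_kite)
    fun _ hm => exists_kiteMap_eq hm

lemma baryCoord_triSplitMap (ℓ : Fin 3) (q : ℝ × ℝ) :
    baryCoord (ℓ + 1) (triSplitMap ℓ q) = (kiteMap q).1 ∧
      baryCoord (ℓ + 2) (triSplitMap ℓ q) = (kiteMap q).2 := by
  fin_cases ℓ <;>
    simp only [baryCoord, triSplitMap, kiteMap, bilinearPsi, triQuadVerts, Fin.sum_univ_four,
      Fin.isValue, Fin.reduceFinMk, Fin.reduceAdd, Matrix.cons_val, Matrix.cons_val_zero,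
      Matrix.cons_val_one, Prod.smul_mk, smul_eq_mul, Prod.mk_add_mk] <;>
    constructor <;> ring

lemma image_triSplitMap (ℓ : Fin 3) :
    triSplitMap ℓ '' (Set.Icc (-1 : ℝ) 1 ×ˢ Set.Icc (-1 : ℝ) 1) = subdomain ℓ := by
  ext p
  rw [mem_subdomain_iff, ← image_kiteMap]
  constructor
  · rintro ⟨q, hq, rfl⟩
    obtain ⟨h₁, h₂⟩ := baryCoord_triSplitMap ℓ q
    exact ⟨q, hq, by rw [h₁, h₂]⟩
  · rintro ⟨q, hq, hqp⟩
    obtain ⟨h₁, h₂⟩ := baryCoord_triSplitMap ℓ q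
    rw [Prod.ext_iff, ← h₁, ← h₂] at hqp
    exact ⟨q, hq, eq_of_baryCoord_eq ℓ hqp.1 hqp.2⟩

lemma iUnion_subdomain :
    ⋃ ℓ, subdomain ℓ = {p : ℝ × ℝ | -1 ≤ p.1 ∧ -1 ≤ p.2 ∧ p.1 + p.2 ≤ 0} := by
  ext p
  simp only [Set.mem_iUnion]
  constructor
  · rintro ⟨ℓ, hp⟩
    have h₀ : 0 ≤ -(p.1 + p.2) / 2 := (hp 0).1
    have h₁ : 0 ≤ (p.1 + 1) / 2 := (hp 1).1
    have h₂ : 0 ≤ (p.2 + 1) / 2 := (hp 2).1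
    exact ⟨by linarith, by linarith, by linarith⟩
  · rintro ⟨h₁, h₂, h₃⟩
    have hp : ∀ j, 0 ≤ baryCoord j p := (forall_fin_three_iff_rotate 0 _).2
      ⟨(by linarith : 0 ≤ -(p.1 + p.2) / 2), (by linarith : 0 ≤ (p.1 + 1) / 2),
        (by linarith : 0 ≤ (p.2 + 1) / 2)⟩
    obtain ⟨ℓ, hℓ⟩ := Finite.exists_max fun j => baryCoord j p
    exact ⟨ℓ, fun j => ⟨hp j, hℓ j⟩⟩

lemma interior_subdomain_inter {ℓ ℓ' : Fin 3} (h : ℓ ≠ ℓ') :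
    interior (subdomain ℓ) ∩ interior (subdomain ℓ') = ∅ := by
  rw [← interior_inter, ← Set.subset_empty_iff]
  have hrate : ![(-3 / 2 : ℝ), 1 / 2, 1] ℓ ≠ ![-3 / 2, 1 / 2, 1] ℓ' := by
    revert h
    fin_cases ℓ <;> fin_cases ℓ' <;> norm_num
  calc interior (subdomain ℓ ∩ subdomain ℓ')
      ⊆ interior {p | baryCoord ℓ p = baryCoord ℓ' p} :=
        interior_mono fun p hp => le_antisymm (hp.2 ℓ).2 (hp.1 ℓ').2
    _ = ∅ := interior_setOf_eq_eq_empty hrate (baryCoord_add_smul ℓ) (baryCoord_add_smul ℓ')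

/-- Splitting the reference triangle by joining the centroid to the edge
midpoints gives three quadrilaterals covering the triangle with pairwise
disjoint interiors, and each bilinear map onto its subdomain has positive
Jacobian determinant on all of `[-1,1]²`. -/
theorem triangle_split_into_three_quadrilaterals :
    (⋃ ℓ : Fin 3,
        triSplitMap ℓ '' (Set.Icc (-1 : ℝ) 1 ×ˢ Set.Icc (-1 : ℝ) 1)) =
      {p : ℝ × ℝ | -1 ≤ p.1 ∧ -1 ≤ p.2 ∧ p.1 + p.2 ≤ 0} ∧
    (∀ ℓ ℓ' : Fin 3, ℓ ≠ ℓ' →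
      interior (triSplitMap ℓ '' (Set.Icc (-1 : ℝ) 1 ×ˢ Set.Icc (-1 : ℝ) 1)) ∩
        interior (triSplitMap ℓ' '' (Set.Icc (-1 : ℝ) 1 ×ˢ Set.Icc (-1 : ℝ) 1)) = ∅) ∧
    (∀ ℓ : Fin 3, ∀ q ∈ Set.Icc (-1 : ℝ) 1 ×ˢ Set.Icc (-1 : ℝ) 1,
      0 < Matrix.det
        !![deriv (fun a => (triSplitMap ℓ (a, q.2)).1) q.1,
            deriv (fun b => (triSplitMap ℓ (q.1, b)).1) q.2;
          deriv (fun a => (triSplitMap ℓ (a, q.2)).2) q.1,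
            deriv (fun b => (triSplitMap ℓ (q.1, b)).2) q.2]) := by
  simp only [image_triSplitMap]
  exact ⟨iUnion_subdomain, fun ℓ ℓ' h => interior_subdomain_inter h,
    fun ℓ q hq => jacobianDet_bilinearMap_pos (cornerDet_triQuadVerts_pos ℓ) hq⟩
end
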